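/- Localization estimate (inequality (2.2), case q > 2). Let n ≥ 1, q > 2, s ∈ (0,1). Let Ω₁ ⊆ Ω₂ ⊆ ℝⁿ with Ω₁ bounded and δ := dist(Ω₁, ℝⁿ \ Ω₂) > 0. Let u : ℝⁿ → ℝ be measurable with ∫_{ℝⁿ} |u(y)|^{q−1}/(1 + |y|^{n+sq}) dy < ∞, let χ : ℝⁿ → [0,1] be measurable with χ = 1 on Ω₂, and set w = χu. Then there exists κ > 0, depending only on n, q, s, δ and sup_{x ∈ Ω₁}|x|, such that for every x ∈ Ω₁: the function z ↦ J_q(u(x) − u(x+z)) − J_q(u(x) − w(x+z)) vanishes for |z| < δ, and ∫_{|z| ≥ δ} |J_q(u(x) − u(x+z)) − J_q(u(x) − w(x+z))| |z|^{−(n+sq)} dz ≤ κ ( |u(x)|^{q−1} + ∫_{ℝⁿ} |u(y)|^{q−1}/(1 + |y|^{n+sq}) dy ). -/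

import Mathlib

/-!
For `‖z‖ < δ` the point `x + z` stays in `Ω₂`, where `χ = 1`, so the two terms cancel.
For `‖z‖ ≥ δ`, since `|J_q t| ≤ |t| ^ (q - 1)`, the difference is at most
`2 ^ q (|u x| ^ (q - 1) + |u (x + z)| ^ (q - 1))`, and `‖z‖ ^ (-p)`, `p = n + s q`, is dominated
by a constant (depending on `δ` and `R`) times both `(1 + ‖z‖ ^ p)⁻¹` and `(1 + ‖x + z‖ ^ p)⁻¹`.
The first weight is integrable because `p > n`; against the second, translating `y = x + z`
turns the `u (x + z)` term into the tail integral of `u`.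
-/

open MeasureTheory Metric

noncomputable section

/-- `J_q(t) = |t|^{q-2} t`. -/
def Jq (q t : ℝ) : ℝ := |t| ^ (q - 2) * t

theorem abs_Jq_le (q t : ℝ) : |Jq q t| ≤ |t| ^ (q - 1) := by
  rcases eq_or_ne t 0 with rfl | ht
  · simp only [Jq, mul_zero, abs_zero]
    positivity
  · rw [Jq, abs_mul, abs_of_nonneg (by positivity), ← Real.rpow_add_one (abs_ne_zero.2 ht),
      show q - 2 + 1 = q - 1 by ring]

theorem Real.add_rpow_le_two_rpow_mul_rpow_add_rpow {a b p : ℝ} (ha : 0 ≤ a) (hb : 0 ≤ b)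
    (hp : 0 ≤ p) : (a + b) ^ p ≤ 2 ^ p * (a ^ p + b ^ p) := calc
  (a + b) ^ p ≤ (2 * max a b) ^ p := by
    rw [two_mul]; gcongr <;> simp
  _ = 2 ^ p * max a b ^ p := Real.mul_rpow zero_le_two (ha.trans (le_max_left a b))
  _ ≤ 2 ^ p * (a ^ p + b ^ p) := by
    gcongr
    rcases le_total a b with h | h
    · rw [max_eq_right h]; exact le_add_of_nonneg_left (by positivity)
    · rw [max_eq_left h]; exact le_add_of_nonneg_right (by positivity)

theorem abs_Jq_sub_sub_Jq_sub_mul_le {q a b c : ℝ} (hq : 1 ≤ q) (hc : |c| ≤ 1) :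
    |Jq q (a - b) - Jq q (a - c * b)| ≤ 2 ^ q * (|a| ^ (q - 1) + |b| ^ (q - 1)) := by
  have hq' : 0 ≤ q - 1 := by linarith
  have hJq_le {t : ℝ} (ht : |t| ≤ |a| + |b|) : |Jq q t| ≤ (|a| + |b|) ^ (q - 1) :=
    (abs_Jq_le q t).trans (Real.rpow_le_rpow (abs_nonneg t) ht hq')
  have hcb : |c * b| ≤ |b| := by
    rw [abs_mul]; exact mul_le_of_le_one_left (abs_nonneg b) hc
  calc |Jq q (a - b) - Jq q (a - c * b)|
      ≤ |Jq q (a - b)| + |Jq q (a - c * b)| := abs_sub _ _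
    _ ≤ 2 * (|a| + |b|) ^ (q - 1) := by
      rw [two_mul]
      exact add_le_add (hJq_le (abs_sub a b)) (hJq_le ((abs_sub a _).trans (by linarith)))
    _ ≤ 2 * (2 ^ (q - 1) * (|a| ^ (q - 1) + |b| ^ (q - 1))) := by
      gcongr
      exact Real.add_rpow_le_two_rpow_mul_rpow_add_rpow (abs_nonneg a) (abs_nonneg b) hq'
    _ = 2 ^ q * (|a| ^ (q - 1) + |b| ^ (q - 1)) := by
      rw [Real.rpow_sub_one two_ne_zero]; ring

theorem integrable_inv_one_add_norm_rpow {E : Type*} [NormedAddCommGroup E] [NormedSpace ℝ E]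
    [FiniteDimensional ℝ E] [MeasurableSpace E] [BorelSpace E] (μ : Measure E)
    [μ.IsAddHaarMeasure] {r : ℝ} (hr : (Module.finrank ℝ E : ℝ) < r) :
    Integrable (fun x : E ↦ (1 + ‖x‖ ^ r)⁻¹) μ := by
  have hr0 : 0 ≤ r := (Module.finrank ℝ E).cast_nonneg.trans hr.le
  refine ((integrable_one_add_norm hr).const_mul (2 ^ r)).mono' (by fun_prop)
    (Filter.Eventually.of_forall fun x ↦ ?_)
  have hbracket : (1 + ‖x‖) ^ r ≤ 2 ^ r * (1 + ‖x‖ ^ r) := by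
    simpa using Real.add_rpow_le_two_rpow_mul_rpow_add_rpow zero_le_one (norm_nonneg x) hr0
  rw [Real.norm_of_nonneg (by positivity), Real.rpow_neg (by positivity), ← div_eq_mul_inv,
    le_div_iff₀ (by positivity), inv_mul_le_iff₀ (by positivity)]
  linarith

theorem inv_rpow_norm_le_mul_inv_one_add_rpow_norm_add {E : Type*} [SeminormedAddCommGroup E]
    {x z : E} {δ R p : ℝ} (hδ : 0 < δ) (hz : δ ≤ ‖z‖) (hx : ‖x‖ ≤ R) (hp : 0 ≤ p) :
    (‖z‖ ^ p)⁻¹ ≤ ((δ ^ p)⁻¹ + (1 + R / δ) ^ p) * (1 + ‖x + z‖ ^ p)⁻¹ := by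
  have hz0 : 0 < ‖z‖ := hδ.trans_le hz
  have hR : 0 ≤ R := (norm_nonneg x).trans hx
  have hxz : ‖x + z‖ ≤ (1 + R / δ) * ‖z‖ := calc
    ‖x + z‖ ≤ R + ‖z‖ := (norm_add_le x z).trans (by linarith)
    _ ≤ (1 + R / δ) * ‖z‖ := by
      have : R ≤ R / δ * ‖z‖ := by
        rw [div_mul_eq_mul_div, le_div_iff₀ hδ]; exact mul_le_mul_of_nonneg_left hz hR
      linarith
  have hone : 1 ≤ (δ ^ p)⁻¹ * ‖z‖ ^ p := by
    rw [inv_mul_eq_div, one_le_div (by positivity)]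
    exact Real.rpow_le_rpow hδ.le hz hp
  have hpow : ‖x + z‖ ^ p ≤ (1 + R / δ) ^ p * ‖z‖ ^ p := by
    rw [← Real.mul_rpow (by positivity) hz0.le]
    exact Real.rpow_le_rpow (norm_nonneg _) hxz hp
  rw [← div_eq_mul_inv, le_div_iff₀ (by positivity), inv_mul_le_iff₀ (by positivity)]
  nlinarith

theorem abs_Jq_sub_sub_Jq_sub_mul_div_rpow_norm_le {E : Type*} [SeminormedAddCommGroup E]
    {x z : E} {q a b c δ R p : ℝ} (hq : 1 ≤ q) (hc : |c| ≤ 1) (hδ : 0 < δ) (hz : δ ≤ ‖z‖)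
    (hx : ‖x‖ ≤ R) (hp : 0 ≤ p) :
    |Jq q (a - b) - Jq q (a - c * b)| / ‖z‖ ^ p ≤
      2 ^ q * ((δ ^ p)⁻¹ + (1 + R / δ) ^ p) * |a| ^ (q - 1) * (1 + ‖z‖ ^ p)⁻¹ +
        2 ^ q * ((δ ^ p)⁻¹ + (1 + R / δ) ^ p) * (|b| ^ (q - 1) / (1 + ‖x + z‖ ^ p)) := by
  set C := (δ ^ p)⁻¹ + (1 + R / δ) ^ p
  have hR : 0 ≤ R := (norm_nonneg x).trans hx
  have hweight₀ : (‖z‖ ^ p)⁻¹ ≤ C * (1 + ‖0 + z‖ ^ p)⁻¹ :=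
    inv_rpow_norm_le_mul_inv_one_add_rpow_norm_add hδ hz (norm_zero.trans_le hR) hp
  rw [zero_add] at hweight₀
  have hweight : (‖z‖ ^ p)⁻¹ ≤ C * (1 + ‖x + z‖ ^ p)⁻¹ :=
    inv_rpow_norm_le_mul_inv_one_add_rpow_norm_add hδ hz hx hp
  rw [div_eq_mul_inv]
  calc _ ≤ 2 ^ q * (|a| ^ (q - 1) + |b| ^ (q - 1)) * (‖z‖ ^ p)⁻¹ := by
        gcongr; exact abs_Jq_sub_sub_Jq_sub_mul_le hq hc
    _ ≤ 2 ^ q * |a| ^ (q - 1) * (C * (1 + ‖z‖ ^ p)⁻¹) +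
          2 ^ q * |b| ^ (q - 1) * (C * (1 + ‖x + z‖ ^ p)⁻¹) := by
        rw [mul_add, add_mul]
        gcongr
    _ = _ := by ring

theorem setLIntegral_ofReal_le_integral_add_integral {G : Type*} [MeasurableSpace G]
    [AddGroup G] [MeasurableAdd G] {μ : Measure G} [μ.IsAddLeftInvariant] {s : Set G}
    (hs : MeasurableSet s) {F g h : G → ℝ} (x : G) (hg : Integrable g μ) (hh : Integrable h μ)
    (hg0 : 0 ≤ g) (hh0 : 0 ≤ h) (hF : ∀ z ∈ s, F z ≤ g z + h (x + z)) :
    ∫⁻ z in s, ENNReal.ofReal (F z) ∂μ ≤ ENNReal.ofReal (∫ z, g z ∂μ + ∫ y, h y ∂μ) := calc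
  ∫⁻ z in s, ENNReal.ofReal (F z) ∂μ
      ≤ ∫⁻ z in s, ENNReal.ofReal (g z) + ENNReal.ofReal (h (x + z)) ∂μ :=
    setLIntegral_mono' hs fun z hz ↦ (ENNReal.ofReal_le_ofReal (hF z hz)).trans
      ENNReal.ofReal_add_le
  _ ≤ ∫⁻ z, ENNReal.ofReal (g z) + ENNReal.ofReal (h (x + z)) ∂μ :=
    setLIntegral_le_lintegral _ _
  _ = ∫⁻ z, ENNReal.ofReal (g z) ∂μ + ∫⁻ y, ENNReal.ofReal (h y) ∂μ := by
    rw [lintegral_add_left' hg.aemeasurable.ennreal_ofReal,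
      lintegral_add_left_eq_self (fun y ↦ ENNReal.ofReal (h y)) x]
  _ = ENNReal.ofReal (∫ z, g z ∂μ + ∫ y, h y ∂μ) := by
    rw [ENNReal.ofReal_add (integral_nonneg hg0) (integral_nonneg hh0),
      ofReal_integral_eq_lintegral_ofReal hg (.of_forall hg0),
      ofReal_integral_eq_lintegral_ofReal hh (.of_forall hh0)]

theorem localization_estimate_q_gt_two_general
    (n : ℕ) (q s δ R : ℝ)
    (hq : 2 < q) (hs : s ∈ Set.Ioo (0 : ℝ) 1) (hδ : 0 < δ)
    (Ω₁ Ω₂ : Set (EuclideanSpace ℝ (Fin n)))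
    (hbd : ∀ x ∈ Ω₁, ‖x‖ ≤ R)
    (hsep : ∀ x ∈ Ω₁, ∀ y : EuclideanSpace ℝ (Fin n), y ∉ Ω₂ → δ ≤ dist x y)
    (u : EuclideanSpace ℝ (Fin n) → ℝ)
    (htail : Integrable (fun y : EuclideanSpace ℝ (Fin n) =>
        |u y| ^ (q - 1) / (1 + ‖y‖ ^ ((n : ℝ) + s * q))))
    (χ : EuclideanSpace ℝ (Fin n) → ℝ)
    (hχ : ∀ x, χ x ∈ Set.Icc (0 : ℝ) 1) (hχ1 : ∀ x ∈ Ω₂, χ x = 1) :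
    ∃ κ > (0 : ℝ), ∀ x ∈ Ω₁,
      (∀ z : EuclideanSpace ℝ (Fin n), ‖z‖ < δ →
        Jq q (u x - u (x + z)) - Jq q (u x - χ (x + z) * u (x + z)) = 0) ∧
      ∫⁻ z in {z : EuclideanSpace ℝ (Fin n) | δ ≤ ‖z‖},
          ENNReal.ofReal
            (|Jq q (u x - u (x + z)) - Jq q (u x - χ (x + z) * u (x + z))| /
              ‖z‖ ^ ((n : ℝ) + s * q))
        ≤ ENNReal.ofReal (κ * (|u x| ^ (q - 1) +
            ∫ y : EuclideanSpace ℝ (Fin n),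
              |u y| ^ (q - 1) / (1 + ‖y‖ ^ ((n : ℝ) + s * q)))) := by
  set p := (n : ℝ) + s * q
  have hp : (n : ℝ) < p := lt_add_of_pos_right _ (mul_pos hs.1 (by linarith))
  set C := (δ ^ p)⁻¹ + (1 + max R 0 / δ) ^ p
  set I₀ := ∫ z : EuclideanSpace ℝ (Fin n), (1 + ‖z‖ ^ p)⁻¹
  set T := ∫ y : EuclideanSpace ℝ (Fin n), |u y| ^ (q - 1) / (1 + ‖y‖ ^ p)
  have hI₀0 : 0 ≤ I₀ := integral_nonneg fun z ↦ by positivity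
  have hT0 : 0 ≤ T := integral_nonneg fun y ↦ by positivity
  refine ⟨2 ^ q * C * (I₀ + 1), by positivity, fun x hx ↦ ⟨fun z hz ↦ ?_, ?_⟩⟩
  · have hxz : x + z ∈ Ω₂ := by
      by_contra h
      have := hsep x hx (x + z) h
      rw [dist_self_add_right] at this
      linarith
    rw [hχ1 _ hxz, one_mul, sub_self]
  set m := |u x| ^ (q - 1)
  calc _ ≤ ENNReal.ofReal ((∫ z : EuclideanSpace ℝ (Fin n), 2 ^ q * C * m * (1 + ‖z‖ ^ p)⁻¹) +
        ∫ y, 2 ^ q * C * (|u y| ^ (q - 1) / (1 + ‖y‖ ^ p))) :=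
        setLIntegral_ofReal_le_integral_add_integral
          (measurableSet_le measurable_const measurable_norm) x
          ((integrable_inv_one_add_norm_rpow _ (by simpa using hp)).const_mul _)
          (htail.const_mul _) (fun z ↦ by positivity) (fun y ↦ by positivity) fun z hz ↦
          abs_Jq_sub_sub_Jq_sub_mul_div_rpow_norm_le (by linarith)
            (abs_le.2 ⟨by linarith [(hχ (x + z)).1], (hχ (x + z)).2⟩) hδ hz
            ((hbd x hx).trans (le_max_left R 0)) ((Nat.cast_nonneg n).trans hp.le)
    _ ≤ ENNReal.ofReal (2 ^ q * C * (I₀ + 1) * (m + T)) := by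
        refine ENNReal.ofReal_le_ofReal ?_
        rw [integral_const_mul, integral_const_mul]
        have : 0 ≤ 2 ^ q * C := by positivity
        nlinarith [mul_nonneg this (mul_nonneg hI₀0 hT0), mul_nonneg this (by positivity : 0 ≤ m)]

/-- **Localization estimate** (inequality (2.2), case `q > 2`). Here `w = χ u` and
`δ ≤ dist(Ω₁, Ω₂ᶜ)` with `δ > 0`, `Ω₁` bounded (with `‖x‖ ≤ R` on `Ω₁`). -/
theorem localization_estimate_q_gt_two
    (n : ℕ) (hn : 1 ≤ n) (q s δ R : ℝ)
    (hq : 2 < q) (hs : s ∈ Set.Ioo (0 : ℝ) 1) (hδ : 0 < δ)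
    (Ω₁ Ω₂ : Set (EuclideanSpace ℝ (Fin n))) (hsub : Ω₁ ⊆ Ω₂)
    (hbd : ∀ x ∈ Ω₁, ‖x‖ ≤ R)
    (hsep : ∀ x ∈ Ω₁, ∀ y : EuclideanSpace ℝ (Fin n), y ∉ Ω₂ → δ ≤ dist x y)
    (u : EuclideanSpace ℝ (Fin n) → ℝ) (hu : Measurable u)
    (htail : Integrable (fun y : EuclideanSpace ℝ (Fin n) =>
        |u y| ^ (q - 1) / (1 + ‖y‖ ^ ((n : ℝ) + s * q))))
    (χ : EuclideanSpace ℝ (Fin n) → ℝ) (hχmeas : Measurable χ)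
    (hχ : ∀ x, χ x ∈ Set.Icc (0 : ℝ) 1) (hχ1 : ∀ x ∈ Ω₂, χ x = 1) :
    ∃ κ > (0 : ℝ), ∀ x ∈ Ω₁,
      (∀ z : EuclideanSpace ℝ (Fin n), ‖z‖ < δ →
        Jq q (u x - u (x + z)) - Jq q (u x - χ (x + z) * u (x + z)) = 0) ∧
      ∫⁻ z in {z : EuclideanSpace ℝ (Fin n) | δ ≤ ‖z‖},
          ENNReal.ofReal
            (|Jq q (u x - u (x + z)) - Jq q (u x - χ (x + z) * u (x + z))| /
              ‖z‖ ^ ((n : ℝ) + s * q))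
        ≤ ENNReal.ofReal (κ * (|u x| ^ (q - 1) +
            ∫ y : EuclideanSpace ℝ (Fin n),
              |u y| ^ (q - 1) / (1 + ‖y‖ ^ ((n : ℝ) + s * q)))) :=
  localization_estimate_q_gt_two_general n q s δ R hq hs hδ Ω₁ Ω₂ hbd hsep u htail χ hχ hχ1
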